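/- Fix N ≥ 3 and δ ∈ ℝ^N (an increment field with cyclic indices). Define the linear increment update at edge k by: δ(k) is replaced by 0, δ(k−1) and δ(k+1) are each increased by δ(k)/2, and all other coordinates are unchanged. Let δ' be the result of applying these updates successively for k = 1, 2, …, N−1 (one cyclic sweep avoiding the closing edge N). Then δ'(N) = δ(N) + (1/2 + 2^{−(N−1)})·δ(1) + ∑_{j=2}^{N−1} 2^{−(N−j)}·δ(j). In particular, δ'(N) ≥ δ(N) + 2^{−(N−2)}·∑_{j=1}^{N−1} δ(j) whenever δ(j) ≥ 0 for all j. -/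

import Mathlib

/-!
Let `c j` be the content of vertex `j` just before the update at edge `j`. Vertex `j + 1` is
untouched until then, so `c (j + 1) = δ (j + 1) + c j / 2`, i.e.
`c (j + 1) = ∑_{m ≤ j + 1} 2^{-(j + 1 - m)} δ m`. Vertex `N` receives only `δ 1 / 2` from the
first update and `c (N - 1) / 2` from the last one.
-/

/-- The linear increment update at edge `k`: `δ(k)` is reset to `0` and `δ(k)/2` is added
to each of the cyclic neighbours `δ(k-1)` and `δ(k+1)`. -/
noncomputable def incUpdate {N : ℕ} (δ : ZMod N → ℝ) (k : ZMod N) : ZMod N → ℝ :=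
  fun i => if i = k then 0
    else if i = k - 1 ∨ i = k + 1 then δ i + δ k / 2
    else δ i

/-- Apply the linear increment updates successively at edges `1, 2, …, j`. -/
noncomputable def sweepAux {N : ℕ} (δ : ZMod N → ℝ) : ℕ → ZMod N → ℝ
  | 0 => δ
  | j + 1 => incUpdate (sweepAux δ j) ((j + 1 : ℕ) : ZMod N)

/-- One cyclic sweep avoiding the closing edge: updates at edges `1, …, N-1`
(vertex `N` is `0` in `ZMod N`). -/
noncomputable def sweep {N : ℕ} (δ : ZMod N → ℝ) : ZMod N → ℝ := sweepAux δ (N - 1)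

open Finset

namespace ZMod

theorem natCast_ne_natCast_of_lt {N a b : ℕ} (ha : a < N) (hb : b < N) (hab : a ≠ b) :
    (a : ZMod N) ≠ b := by
  rwa [Ne, natCast_eq_natCast_iff', Nat.mod_eq_of_lt ha, Nat.mod_eq_of_lt hb]

end ZMod

section incUpdate

variable {N : ℕ} (δ : ZMod N → ℝ)

theorem incUpdate_apply_of_ne {i k : ZMod N} (h : i ≠ k) (h₁ : i ≠ k - 1) (h₂ : i ≠ k + 1) :
    incUpdate δ k i = δ i := by
  simp [incUpdate, h, h₁, h₂]

variable [Nontrivial (ZMod N)]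

theorem incUpdate_apply_add_one (k : ZMod N) : incUpdate δ k (k + 1) = δ (k + 1) + δ k / 2 := by
  simp [incUpdate]

theorem incUpdate_apply_sub_one (k : ZMod N) : incUpdate δ k (k - 1) = δ (k - 1) + δ k / 2 := by
  simp [incUpdate]

end incUpdate

theorem incUpdate_natCast_apply_of_far {N i k : ℕ} (δ : ZMod N → ℝ) (hi : i < N) (hk : 0 < k)
    (hkN : k + 1 < N) (hfar : i + 1 < k ∨ k + 1 < i) : incUpdate δ k i = δ i := by
  apply incUpdate_apply_of_ne
  · exact ZMod.natCast_ne_natCast_of_lt hi (by omega) (by omega)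
  · rw [← Nat.cast_pred hk]
    exact ZMod.natCast_ne_natCast_of_lt hi (by omega) (by omega)
  · rw [← Nat.cast_succ]
    exact ZMod.natCast_ne_natCast_of_lt hi hkN (by omega)

section sweepAux

variable {N : ℕ} (δ : ZMod N → ℝ)

theorem sweepAux_natCast_apply_of_lt {i : ℕ} (hi : i < N) :
    ∀ j, j + 1 < i → sweepAux δ j i = δ i
  | 0, _ => rfl
  | j + 1, hj => by
    rw [sweepAux, incUpdate_natCast_apply_of_far _ hi j.succ_pos (by omega) (by omega),
      sweepAux_natCast_apply_of_lt hi j (by omega)]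

theorem sweepAux_natCast_apply_succ :
    ∀ j, j + 1 < N →
      sweepAux δ j (j + 1 : ℕ) = ∑ m ∈ Icc 1 (j + 1), (1 / 2 : ℝ) ^ (j + 1 - m) * δ m
  | 0, _ => by simp [sweepAux]
  | j + 1, hj => by
    have : Fact (1 < N) := ⟨by omega⟩
    have hcast : ((j + 1 + 1 : ℕ) : ZMod N) = ((j + 1 : ℕ) : ZMod N) + 1 := by push_cast; rfl
    rw [sweepAux, hcast, incUpdate_apply_add_one, ← hcast,
      sweepAux_natCast_apply_of_lt δ hj j (by omega), sweepAux_natCast_apply_succ j (by omega),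
      sum_Icc_succ_top (M := ℝ) (b := j + 1) (by omega), sum_div, add_comm]
    congr 1
    · refine sum_congr rfl fun m hm => ?_
      rw [show j + 1 + 1 - m = j + 1 - m + 1 by grind, pow_succ]
      ring
    · simp

theorem sweepAux_apply_zero {j : ℕ} (hj : 1 ≤ j) (hjN : j + 2 ≤ N) :
    sweepAux δ j 0 = δ 0 + δ 1 / 2 := by
  have : Fact (1 < N) := ⟨by omega⟩
  induction j, hj using Nat.le_induction with
  | base =>
    have hcast : (0 : ZMod N) = ((0 + 1 : ℕ) : ZMod N) - 1 := by simp
    rw [sweepAux, hcast, incUpdate_apply_sub_one, ← hcast]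
    simp [sweepAux]
  | succ j hj ih =>
    rw [sweepAux, ← Nat.cast_zero,
      incUpdate_natCast_apply_of_far _ (by omega) j.succ_pos (by omega) (by omega), Nat.cast_zero,
      ih (by omega)]

end sweepAux

theorem sweep_apply_zero {N : ℕ} (hN : 3 ≤ N) (δ : ZMod N → ℝ) :
    sweep δ 0 = δ 0 + δ 1 / 2 + ∑ m ∈ Icc 1 (N - 1), (1 / 2 : ℝ) ^ (N - m) * δ m := by
  have : Fact (1 < N) := ⟨by omega⟩
  have hlast : ((N - 2 + 1 : ℕ) : ZMod N) + 1 = 0 := by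
    rw [← Nat.cast_add_one, show N - 2 + 1 + 1 = N by omega, ZMod.natCast_self]
  rw [sweep, show N - 1 = N - 2 + 1 by omega, sweepAux, ← hlast, incUpdate_apply_add_one, hlast,
    sweepAux_apply_zero δ (by omega) (by omega), sweepAux_natCast_apply_succ δ (N - 2) (by omega),
    sum_div]
  congr 1
  refine sum_congr rfl fun m hm => ?_
  rw [show N - m = N - 2 + 1 - m + 1 by grind, pow_succ]
  ring

theorem cyclic_sweep_accumulation_general
    (N : ℕ) (hN : 3 ≤ N) (δ : ZMod N → ℝ) :
    sweep δ 0 = δ 0 + (1 / 2 + (1 / 2 : ℝ) ^ (N - 1)) * δ 1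
      + ∑ j ∈ Finset.Icc 2 (N - 1), (1 / 2 : ℝ) ^ (N - j) * δ (j : ZMod N) ∧
    ((∀ i : ZMod N, 0 ≤ δ i) →
      sweep δ 0 ≥ δ 0 + (1 / 2 : ℝ) ^ (N - 2) * ∑ j ∈ Finset.Icc 1 (N - 1), δ (j : ZMod N)) := by
  have hsplit : Icc 1 (N - 1) = insert 1 (Icc 2 (N - 1)) :=
    (insert_Icc_add_one_left_eq_Icc (by omega)).symm
  have hformula : sweep δ 0 = δ 0 + (1 / 2 + (1 / 2 : ℝ) ^ (N - 1)) * δ 1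
      + ∑ j ∈ Icc 2 (N - 1), (1 / 2 : ℝ) ^ (N - j) * δ j := by
    rw [sweep_apply_zero hN, hsplit, sum_insert (by simp), Nat.cast_one]
    ring
  refine ⟨hformula, fun hδ => ?_⟩
  have hfirst : (1 / 2 : ℝ) ^ (N - 2) ≤ 1 / 2 + (1 / 2) ^ (N - 1) := by
    have hhalf : (1 / 2 : ℝ) ^ (N - 2) ≤ 1 / 2 :=
      pow_le_of_le_one (by norm_num) (by norm_num) (by omega)
    rw [show N - 1 = N - 2 + 1 by omega, pow_succ]
    linarith
  have hrest : ∀ j ∈ Icc 2 (N - 1), (1 / 2 : ℝ) ^ (N - 2) * δ j ≤ (1 / 2) ^ (N - j) * δ j :=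
    fun j hj => mul_le_mul_of_nonneg_right
      (pow_le_pow_of_le_one (by norm_num) (by norm_num) (by grind)) (hδ _)
  rw [hformula, hsplit, sum_insert (by simp), mul_add, mul_sum, Nat.cast_one, ge_iff_le, add_assoc]
  gcongr δ 0 + (?_ + ?_)
  · exact mul_le_mul_of_nonneg_right hfirst (hδ 1)
  · exact sum_le_sum hrest

/-- Increment accumulation under one cyclic sweep avoiding the closing edge:
`δ'(N) = δ(N) + (1/2 + 2^{-(N-1)})δ(1) + ∑_{j=2}^{N-1} 2^{-(N-j)} δ(j)`, and if all
coordinates are nonnegative then `δ'(N) ≥ δ(N) + 2^{-(N-2)} ∑_{j=1}^{N-1} δ(j)`.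
(The closing edge has index `N`, i.e. `0` in `ZMod N`.) -/
theorem cyclic_sweep_accumulation
    (N : ℕ) [NeZero N] (hN : 3 ≤ N) (δ : ZMod N → ℝ) :
    sweep δ 0 = δ 0 + (1 / 2 + (1 / 2 : ℝ) ^ (N - 1)) * δ 1
      + ∑ j ∈ Finset.Icc 2 (N - 1), (1 / 2 : ℝ) ^ (N - j) * δ (j : ZMod N) ∧
    ((∀ i : ZMod N, 0 ≤ δ i) →
      sweep δ 0 ≥ δ 0 + (1 / 2 : ℝ) ^ (N - 2) * ∑ j ∈ Finset.Icc 1 (N - 1), δ (j : ZMod N)) :=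
  cyclic_sweep_accumulation_general N hN δ
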